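/- Let G = (V, E) be a finite connected undirected graph with positive edge weights C_{ij} > 0, let p > 1, let B be a nonempty proper subset of V, and fix boundary values w ∈ ℝ^B. Then for every g ∈ ℝ^{V∖B}, the discrete p-Laplacian Dirichlet problem (L_p(v))_i = −g_i for all i ∈ V∖B, v_i = w_i for all i ∈ B, has a solution v ∈ ℝ^V. -/

import Mathlib

open Finset

/-- The discrete `p`-Laplacian of a weighted graph. -/
noncomputable def discretePLaplacian {V : Type*} [Fintype V] (G : SimpleGraph V)
    [DecidableRel G.Adj] (C : V → V → ℝ) (p : ℝ) (v : V → ℝ) (i : V) : ℝ :=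
  ∑ j ∈ univ.filter (fun j => G.Adj i j),
    C i j * (v i - v j) * |C i j * (v i - v j)| ^ (p - 2)

/-- derivative of a single energy term along a line -/
lemma term_hasDerivAt {p c d : ℝ} (hp : 1 < p) (hc : 0 < c) {f : ℝ → ℝ}
    (hf : HasDerivAt f d 0) :
    HasDerivAt (fun t => (1/(2*p*c)) * |c * f t| ^ p)
      ((1/2) * d * ((c * f 0) * |c * f 0| ^ (p-2))) 0 := by
  have h1 : HasDerivAt (fun t => c * f t) (c * d) 0 := hf.const_mul c
  have h2 := (hasDerivAt_abs_rpow (c * f 0) hp).comp 0 h1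
  have h3 := h2.const_mul (1/(2*p*c))
  convert h3 using 1
  · rfl
  · rfl
  · rfl
  have hp0 : p ≠ 0 := by positivity
  field_simp


noncomputable def pEnergy {V : Type*} [Fintype V] (G : SimpleGraph V) [DecidableRel G.Adj]
    (C : V → V → ℝ) (p : ℝ) (B : Set V) [DecidablePred (· ∈ B)] (g : V → ℝ) (v : V → ℝ) : ℝ :=
  (∑ j, ∑ k ∈ univ.filter (fun k => G.Adj j k), (1/(2*p*C j k)) * |C j k * (v j - v k)| ^ p)
  + ∑ m ∈ univ.filter (fun m => m ∉ B), g m * v m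


lemma energy_hasDerivAt {V : Type*} [Fintype V] [DecidableEq V] (G : SimpleGraph V)
    [DecidableRel G.Adj] (C : V → V → ℝ)
    (hsymm : ∀ i j, C i j = C j i) (hpos : ∀ i j, G.Adj i j → 0 < C i j)
    (p : ℝ) (hp : 1 < p) (B : Set V) [DecidablePred (· ∈ B)] (g : V → ℝ)
    (v : V → ℝ) (i : V) (hi : i ∉ B) :
    HasDerivAt (fun t => pEnergy G C p B g (fun m => if m = i then v i + t else v m))
      (discretePLaplacian G C p v i + g i) 0 := by
  set T : V → V → ℝ := fun j k => C j k * (v j - v k) * |C j k * (v j - v k)| ^ (p - 2) with hT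
  -- derivative of the edge part
  have hedge : HasDerivAt (fun t => ∑ j, ∑ k ∈ univ.filter (fun k => G.Adj j k),
      (1/(2*p*C j k)) * |C j k * ((if j = i then v i + t else v j) - (if k = i then v i + t else v k))| ^ p)
      (∑ j, ∑ k ∈ univ.filter (fun k => G.Adj j k),
        (1/2) * ((if j = i then (1:ℝ) else 0) - (if k = i then 1 else 0)) * T j k) 0 := by
    apply HasDerivAt.fun_sum
    intro j _
    apply HasDerivAt.fun_sum
    intro k hk
    have hadj : G.Adj j k := by simpa using hk
    have hc : 0 < C j k := hpos j k hadj
    have hfj : HasDerivAt (fun t : ℝ => if j = i then v i + t else v j)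
        (if j = i then (1:ℝ) else 0) 0 := by
      split_ifs with h
      · simpa using (hasDerivAt_id (0:ℝ)).const_add (v i)
      · exact hasDerivAt_const 0 (v j)
    have hfk : HasDerivAt (fun t : ℝ => if k = i then v i + t else v k)
        (if k = i then (1:ℝ) else 0) 0 := by
      split_ifs with h
      · simpa using (hasDerivAt_id (0:ℝ)).const_add (v i)
      · exact hasDerivAt_const 0 (v k)
    have hf := hfj.sub hfk
    have := term_hasDerivAt hp hc hf
    convert this using 2
    · rfl
    · rfl
    · rfl
    · have h0j : (if j = i then v i + 0 else v j) = v j := by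
        split_ifs with h; · rw [h]; ring
        · rfl
      have h0k : (if k = i then v i + 0 else v k) = v k := by
        split_ifs with h; · rw [h]; ring
        · rfl
      rw [hT]; simp only [Pi.sub_apply, h0j, h0k]; try ring
  -- derivative of the linear part
  have hlin : HasDerivAt (fun t => ∑ m ∈ univ.filter (fun m => m ∉ B),
      g m * (if m = i then v i + t else v m)) (g i) 0 := by
    have h : HasDerivAt (fun t => ∑ m ∈ univ.filter (fun m => m ∉ B),
        g m * (if m = i then v i + t else v m))
        (∑ m ∈ univ.filter (fun m => m ∉ B), (if m = i then g m else 0)) 0 := by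
      apply HasDerivAt.fun_sum
      intro m _
      split_ifs with h
      · simpa using ((hasDerivAt_id (0:ℝ)).const_add (v i)).const_mul (g m)
      · exact hasDerivAt_const 0 (g m * v m)
    convert h using 1
    rw [Finset.sum_ite_eq' (univ.filter (fun m => m ∉ B)) i (fun m => g m)]
    simp [hi]
  have htot := hedge.add hlin
  convert htot using 1
  · rfl
  · rfl
  · rfl
  congr 1
  -- edge sum equals the discrete p-Laplacian
  have hsplit : ∀ j k : V, (1/2) * ((if j = i then (1:ℝ) else 0) - (if k = i then 1 else 0)) * T j k
      = (if j = i then (1/2) * T j k else 0) - (if k = i then (1/2) * T j k else 0) := by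
    intro j k; split_ifs <;> ring
  rw [Finset.sum_congr rfl (fun j _ => Finset.sum_congr rfl (fun k _ => hsplit j k))]
  simp only [Finset.sum_sub_distrib]
  have hS1 : ∑ j, ∑ k ∈ univ.filter (fun k => G.Adj j k), (if j = i then (1/2) * T j k else 0)
      = (1/2) * discretePLaplacian G C p v i := by
    have : ∀ j : V, ∑ k ∈ univ.filter (fun k => G.Adj j k), (if j = i then (1/2) * T j k else 0)
        = if j = i then ∑ k ∈ univ.filter (fun k => G.Adj j k), (1/2) * T j k else 0 := by
      intro j; split_ifs <;> simp
    rw [Finset.sum_congr rfl (fun j _ => this j), Finset.sum_ite_eq' univ i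
      (fun j => ∑ k ∈ univ.filter (fun k => G.Adj j k), (1/2) * T j k)]
    simp [discretePLaplacian, Finset.mul_sum, hT]
  have hS2 : ∑ j, ∑ k ∈ univ.filter (fun k => G.Adj j k), (if k = i then (1/2) * T j k else 0)
      = -((1/2) * discretePLaplacian G C p v i) := by
    have h1 : ∀ j : V, ∑ k ∈ univ.filter (fun k => G.Adj j k), (if k = i then (1/2) * T j k else 0)
        = if G.Adj j i then (1/2) * T j i else 0 := by
      intro j
      rw [Finset.sum_ite_eq' (univ.filter (fun k => G.Adj j k)) i (fun k => (1/2) * T j k)]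
      simp
    rw [Finset.sum_congr rfl (fun j _ => h1 j)]
    have h2 : ∀ j : V, (if G.Adj j i then (1/2) * T j i else 0)
        = if G.Adj i j then -((1/2) * T i j) else 0 := by
      intro j
      have hcond : G.Adj j i ↔ G.Adj i j := G.adj_comm j i
      by_cases h : G.Adj i j
      · rw [if_pos (hcond.mpr h), if_pos h]
        have hv : C j i * (v j - v i) = -(C i j * (v i - v j)) := by rw [hsymm j i]; ring
        rw [hT]
        simp only [hv, abs_neg]
        ring
      · rw [if_neg (fun hh => h (hcond.mp hh)), if_neg h]
    rw [Finset.sum_congr rfl (fun j _ => h2 j)]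
    rw [← Finset.sum_filter]
    simp only [discretePLaplacian, hT]
    simp [Finset.sum_neg_distrib, Finset.mul_sum]
  rw [hS1, hS2]
  ring

lemma walk_bound {V : Type*} [Fintype V] (G : SimpleGraph V) [DecidableRel G.Adj]
    (v : V → ℝ) : ∀ {x y : V} (W : G.Walk x y),
    |v x - v y| ≤ W.length * (∑ j, ∑ k ∈ univ.filter (fun k => G.Adj j k), |v j - v k|) := by
  intro x y W
  set Q := ∑ j, ∑ k ∈ univ.filter (fun k => G.Adj j k), |v j - v k| with hQdef
  have hQ0 : 0 ≤ Q := Finset.sum_nonneg fun j _ => Finset.sum_nonneg fun k _ => abs_nonneg _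
  have hedge : ∀ {a b : V}, G.Adj a b → |v a - v b| ≤ Q := by
    intro a b hab
    have h1 : |v a - v b| ≤ ∑ k ∈ univ.filter (fun k => G.Adj a k), |v a - v k| :=
      Finset.single_le_sum (f := fun k => |v a - v k|) (fun k _ => abs_nonneg _) (Finset.mem_filter.mpr ⟨mem_univ b, hab⟩)
    refine h1.trans ?_
    exact Finset.single_le_sum (f := fun j => ∑ k ∈ univ.filter (fun k => G.Adj j k), |v j - v k|)
      (fun j _ => Finset.sum_nonneg fun k _ => abs_nonneg _) (mem_univ a)
  induction W with
  | nil => simp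
  | @cons a b c h q ih =>
      have h1 : |v a - v c| ≤ |v a - v b| + |v b - v c| := by
        have := abs_sub_le (v a) (v b) (v c); linarith [abs_sub_le (v a) (v b) (v c)]
      have h2 := hedge h
      rw [SimpleGraph.Walk.length_cons]
      push_cast
      linarith

lemma exists_minimizer {V : Type*} [Fintype V] (G : SimpleGraph V) [DecidableRel G.Adj]
    (hconn : G.Connected) (C : V → V → ℝ) (hpos : ∀ i j, G.Adj i j → 0 < C i j)
    (p : ℝ) (hp : 1 < p) (B : Set V) [DecidablePred (· ∈ B)] (hB : B.Nonempty)
    (w g : V → ℝ) :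
    ∃ v : V → ℝ, (∀ m ∈ B, v m = w m) ∧
      ∀ u : V → ℝ, (∀ m ∈ B, u m = w m) → pEnergy G C p B g v ≤ pEnergy G C p B g u := by
  obtain ⟨b, hb⟩ := hB
  have hp0 : 0 < p := by linarith
  set S : (V → ℝ) → ℝ := fun v =>
    ∑ j, ∑ k ∈ univ.filter (fun k => G.Adj j k), (1/(2*p*C j k)) * |C j k * (v j - v k)| ^ p
    with hSdef
  set L : (V → ℝ) → ℝ := fun v => ∑ m ∈ univ.filter (fun m => m ∉ B), g m * v m with hLdef
  set Q : (V → ℝ) → ℝ := fun v => ∑ j, ∑ k ∈ univ.filter (fun k => G.Adj j k), |v j - v k|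
    with hQdef
  have hFSL : ∀ v, pEnergy G C p B g v = S v + L v := fun v => rfl
  -- nonnegativity of single terms
  have htermnn : ∀ (v : V → ℝ) (j k : V), G.Adj j k →
      0 ≤ (1/(2*p*C j k)) * |C j k * (v j - v k)| ^ p := by
    intro v j k hadj
    have hc := hpos j k hadj
    apply mul_nonneg
    · apply le_of_lt; apply div_pos one_pos; positivity
    · exact Real.rpow_nonneg (abs_nonneg _) p
  have hSnn : ∀ v, 0 ≤ S v := by
    intro v
    apply Finset.sum_nonneg; intro j _
    apply Finset.sum_nonneg; intro k hk
    exact htermnn v j k (by simpa using hk)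
  have hterm_le : ∀ (v : V → ℝ) (j k : V), G.Adj j k →
      (1/(2*p*C j k)) * |C j k * (v j - v k)| ^ p ≤ S v := by
    intro v j k hadj
    have h1 : (1/(2*p*C j k)) * |C j k * (v j - v k)| ^ p
        ≤ ∑ k' ∈ univ.filter (fun k' => G.Adj j k'),
          (1/(2*p*C j k')) * |C j k' * (v j - v k')| ^ p := by
      apply Finset.single_le_sum (f := fun k' => (1/(2*p*C j k')) * |C j k' * (v j - v k')| ^ p)
      · intro k' hk'; exact htermnn v j k' (by simpa using hk')
      · exact Finset.mem_filter.mpr ⟨mem_univ k, hadj⟩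
    refine h1.trans ?_
    apply Finset.single_le_sum (f := fun j' => ∑ k' ∈ univ.filter (fun k' => G.Adj j' k'),
      (1/(2*p*C j' k')) * |C j' k' * (v j' - v k')| ^ p)
    · intro j' _; apply Finset.sum_nonneg; intro k' hk'; exact htermnn v j' k' (by simpa using hk')
    · exact mem_univ j
  -- Q bound via S
  set c₁ : ℝ := ∑ j, ∑ k ∈ univ.filter (fun k => G.Adj j k), (2*p*C j k) ^ (1/p) / C j k
    with hc₁def
  have hc₁nn : 0 ≤ c₁ := by
    apply Finset.sum_nonneg; intro j _; apply Finset.sum_nonneg; intro k hk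
    have hc := hpos j k (by simpa using hk)
    apply div_nonneg (Real.rpow_nonneg (by positivity) _) hc.le
  have hQle : ∀ v, Q v ≤ c₁ * S v ^ (1/p) := by
    intro v
    have hper : ∀ j k, G.Adj j k →
        |v j - v k| ≤ ((2*p*C j k) ^ (1/p) / C j k) * S v ^ (1/p) := by
      intro j k hadj
      have hc := hpos j k hadj
      set c := C j k
      set d := v j - v k
      set e := (1/(2*p*c)) * |c * d| ^ p with hedef
      have he0 : 0 ≤ e := htermnn v j k hadj
      have h1 : |c * d| ^ p = 2*p*c * e := by
        rw [hedef]; field_simp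
      have h2 : (|c * d| ^ p) ^ (1/p) = |c * d| := by
        rw [← Real.rpow_mul (abs_nonneg _), mul_one_div, div_self hp0.ne', Real.rpow_one]
      have h3 : |c * d| = ((2*p*c) ^ (1/p)) * e ^ (1/p) := by
        rw [← h2, h1, Real.mul_rpow (by positivity) he0]
      have h4 : e ^ (1/p) ≤ S v ^ (1/p) :=
        Real.rpow_le_rpow he0 (hterm_le v j k hadj) (by positivity)
      have h5 : |d| = |c * d| / c := by
        rw [abs_mul, abs_of_pos hc]; field_simp
      rw [h5, h3]
      rw [div_mul_eq_mul_div, div_le_div_iff_of_pos_right hc]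
      exact mul_le_mul_of_nonneg_left h4 (Real.rpow_nonneg (by positivity) _)
    calc Q v ≤ ∑ j, ∑ k ∈ univ.filter (fun k => G.Adj j k),
        ((2*p*C j k) ^ (1/p) / C j k) * S v ^ (1/p) := by
          apply Finset.sum_le_sum; intro j _
          apply Finset.sum_le_sum; intro k hk
          exact hper j k (by simpa using hk)
      _ = c₁ * S v ^ (1/p) := by
          rw [hc₁def, Finset.sum_mul]
          exact Finset.sum_congr rfl fun j _ => (Finset.sum_mul _ _ _).symm
  -- walk bound constant
  set N : ℕ := univ.sup fun i => ((hconn.preconnected i b).some).length with hNdef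
  have hK : ∀ v : V → ℝ, (∀ m ∈ B, v m = w m) → ∀ i, |v i| ≤ |w b| + N * Q v := by
    intro v hv i
    have hQ0 : 0 ≤ Q v :=
      Finset.sum_nonneg fun j _ => Finset.sum_nonneg fun k _ => abs_nonneg _
    have hW := walk_bound G v ((hconn.preconnected i b).some)
    have hlen : ((((hconn.preconnected i b).some).length : ℕ) : ℝ) ≤ (N : ℝ) := by
      exact_mod_cast Finset.le_sup (f := fun i => ((hconn.preconnected i b).some).length)
        (mem_univ i)
    have h1 : |v i - v b| ≤ (N : ℝ) * Q v :=
      hW.trans (mul_le_mul_of_nonneg_right hlen hQ0)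
    have h2 : v b = w b := hv b hb
    have h3 : |v i| ≤ |v i - v b| + |v b| := by
      have := abs_add_le (v i - v b) (v b); simpa using this
    have h4 : |v b| = |w b| := by rw [h2]
    linarith
  -- linear part bound
  set c₂ : ℝ := ∑ m, |g m| with hc₂def
  have hc₂nn : 0 ≤ c₂ := Finset.sum_nonneg fun m _ => abs_nonneg _
  have hL : ∀ (v : V → ℝ) (M : ℝ), 0 ≤ M → (∀ i, |v i| ≤ M) → -(c₂ * M) ≤ L v := by
    intro v M hM0 hM
    have h1 : |L v| ≤ c₂ * M := by
      calc |L v| ≤ ∑ m ∈ univ.filter (fun m => m ∉ B), |g m * v m| :=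
            Finset.abs_sum_le_sum_abs _ _
        _ ≤ ∑ m ∈ univ.filter (fun m => m ∉ B), |g m| * M := by
            apply Finset.sum_le_sum; intro m _
            rw [abs_mul]
            exact mul_le_mul_of_nonneg_left (hM m) (abs_nonneg _)
        _ ≤ ∑ m, |g m| * M := by
            apply Finset.sum_le_sum_of_subset_of_nonneg (Finset.filter_subset _ _)
            intro m _ _; exact mul_nonneg (abs_nonneg _) hM0
        _ = c₂ * M := by rw [hc₂def, Finset.sum_mul]
    linarith [neg_abs_le (L v)]
  -- base point
  set v₀ : V → ℝ := fun m => if m ∈ B then w m else 0 with hv₀def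
  have hv₀K : ∀ m ∈ B, v₀ m = w m := by intro m hm; simp [hv₀def, hm]
  set M₀ : ℝ := pEnergy G C p B g v₀ with hM₀def
  -- constants
  set K₁ : ℝ := |M₀| + c₂ * |w b| with hK₁def
  set K₂ : ℝ := c₂ * ((N : ℝ) * c₁) with hK₂def
  have hK₁nn : 0 ≤ K₁ := by
    rw [hK₁def]; exact add_nonneg (abs_nonneg _) (mul_nonneg hc₂nn (abs_nonneg _))
  have hK₂nn : 0 ≤ K₂ := by
    rw [hK₂def]; exact mul_nonneg hc₂nn (mul_nonneg (Nat.cast_nonneg N) hc₁nn)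
  set T₀ : ℝ := 1 + (K₁ + K₂) ^ (1/(p-1)) with hT₀def
  have hT₀nn : (0:ℝ) ≤ T₀ := by
    have hE := Real.rpow_nonneg (by linarith : (0:ℝ) ≤ K₁ + K₂) (1/(p-1))
    rw [hT₀def]; linarith
  set R : ℝ := |w b| + ((N : ℝ) * c₁) * T₀ with hRdef
  have hR0 : 0 ≤ R := by
    rw [hRdef]
    exact add_nonneg (abs_nonneg _)
      (mul_nonneg (mul_nonneg (Nat.cast_nonneg N) hc₁nn) hT₀nn)
  -- the coercivity bound
  have hbound : ∀ v : V → ℝ, (∀ m ∈ B, v m = w m) → pEnergy G C p B g v ≤ M₀ →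
      ∀ i, |v i| ≤ R := by
    intro v hv hFv i
    set t : ℝ := S v ^ (1/p) with htdef
    have ht0 : 0 ≤ t := Real.rpow_nonneg (hSnn v) _
    have hSt : S v = t ^ p := by
      rw [htdef, ← Real.rpow_mul (hSnn v), one_div_mul_cancel hp0.ne', Real.rpow_one]
    have hvi : ∀ i, |v i| ≤ |w b| + ((N:ℝ) * c₁) * t := by
      intro i
      have h1 := hK v hv i
      have h2 : (N:ℝ) * Q v ≤ (N:ℝ) * (c₁ * t) :=
        mul_le_mul_of_nonneg_left (hQle v) (Nat.cast_nonneg N)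
      have h3 : ((N:ℝ) * c₁) * t = (N:ℝ) * (c₁ * t) := by ring
      rw [h3]; linarith
    have hMb : 0 ≤ |w b| + ((N:ℝ) * c₁) * t :=
      add_nonneg (abs_nonneg _) (mul_nonneg (mul_nonneg (Nat.cast_nonneg N) hc₁nn) ht0)
    have hLb := hL v _ hMb hvi
    have hineq : t ^ p ≤ K₁ + K₂ * t := by
      have h4 := hFv
      rw [hFSL v, hSt] at h4
      have h5 : M₀ ≤ |M₀| := le_abs_self _
      rw [hK₁def, hK₂def]
      nlinarith
    have hclaim : t ≤ T₀ := by
      by_contra hcon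
      push_neg at hcon
      have hE0 : 0 ≤ (K₁ + K₂) ^ (1/(p-1)) := Real.rpow_nonneg (by linarith) _
      have ht1 : 1 < t := by rw [hT₀def] at hcon; linarith
      have hKlt : K₁ + K₂ < t ^ (p-1) := by
        have ha : (K₁ + K₂) ^ (1/(p-1)) < t := by rw [hT₀def] at hcon; linarith
        have hpm : (0:ℝ) < p - 1 := by linarith
        have h2 := Real.rpow_lt_rpow hE0 ha hpm
        rwa [← Real.rpow_mul (by linarith : (0:ℝ) ≤ K₁ + K₂), one_div_mul_cancel hpm.ne',
          Real.rpow_one] at h2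
      have htp : t ^ p = t ^ (p-1) * t := by
        rw [show p = (p-1) + 1 by ring, Real.rpow_add_one (by linarith : t ≠ 0)]
        ring_nf
      have h6 : (K₁ + K₂) * t < t ^ (p-1) * t :=
        mul_lt_mul_of_pos_right hKlt (by linarith)
      have h9 : K₁ * 1 ≤ K₁ * t := mul_le_mul_of_nonneg_left ht1.le hK₁nn
      nlinarith
    have h7 := hvi i
    have h8 : ((N:ℝ) * c₁) * t ≤ ((N:ℝ) * c₁) * T₀ :=
      mul_le_mul_of_nonneg_left hclaim (mul_nonneg (Nat.cast_nonneg N) hc₁nn)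
    rw [hRdef]; linarith
  -- continuity of the energy
  have hFcont : Continuous (pEnergy G C p B g) := by
    have habs : Continuous (fun x : ℝ => |x| ^ p) := by
      rw [continuous_iff_continuousAt]
      intro x
      exact (Real.continuousAt_rpow_const _ _ (Or.inr hp0.le)).comp continuous_abs.continuousAt
    unfold pEnergy
    apply Continuous.add
    · apply continuous_finset_sum; intro j _
      apply continuous_finset_sum; intro k _
      exact continuous_const.mul (habs.comp (continuous_const.mul
        ((continuous_apply j).sub (continuous_apply k))))
    · apply continuous_finset_sum; intro m _
      exact continuous_const.mul (continuous_apply m)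
  -- compactness argument
  set KS : Set (V → ℝ) := {v | ∀ m ∈ B, v m = w m} with hKSdef
  have hKclosed : IsClosed KS := by
    have hEq : KS = ⋂ m ∈ B, {v : V → ℝ | v m = w m} := by
      ext v; simp [hKSdef]
    rw [hEq]
    exact isClosed_biInter fun m _ => isClosed_eq (continuous_apply m) continuous_const
  set T : Set (V → ℝ) := KS ∩ (pEnergy G C p B g) ⁻¹' Set.Iic M₀ with hTdef
  have hTclosed : IsClosed T := hKclosed.inter (isClosed_Iic.preimage hFcont)
  have hTsub : T ⊆ Metric.closedBall 0 R := by
    intro v hv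
    rw [Metric.mem_closedBall, dist_zero_right]
    rw [pi_norm_le_iff_of_nonneg hR0]
    intro i
    rw [Real.norm_eq_abs]
    exact hbound v hv.1 hv.2 i
  have hTcompact : IsCompact T :=
    (isCompact_closedBall (0 : V → ℝ) R).of_isClosed_subset hTclosed hTsub
  have hv₀T : v₀ ∈ T := ⟨hv₀K, le_refl M₀⟩
  obtain ⟨x, hxT, hxmin⟩ := hTcompact.exists_isMinOn ⟨v₀, hv₀T⟩ hFcont.continuousOn
  refine ⟨x, hxT.1, fun u hu => ?_⟩
  by_cases h : pEnergy G C p B g u ≤ M₀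
  · exact isMinOn_iff.mp hxmin u ⟨hu, h⟩
  · push_neg at h
    have h1 : pEnergy G C p B g x ≤ M₀ := hxT.2
    linarith


theorem stmt17 {V : Type*} [Fintype V] (G : SimpleGraph V) [DecidableRel G.Adj]
    (hconn : G.Connected) (C : V → V → ℝ)
    (hsymm : ∀ i j, C i j = C j i) (hpos : ∀ i j, G.Adj i j → 0 < C i j)
    (p : ℝ) (hp : 1 < p) (B : Set V) (hB : B.Nonempty) (hBne : B ≠ Set.univ)
    (w : V → ℝ) (g : V → ℝ) :
    ∃ v : V → ℝ,
      (∀ i ∉ B, discretePLaplacian G C p v i = -g i) ∧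
      (∀ i ∈ B, v i = w i) := by
  classical
  obtain ⟨v, hvB, hvmin⟩ := exists_minimizer G hconn C hpos p hp B hB w g
  refine ⟨v, ?_, hvB⟩
  intro i hi
  have h0 : (fun m => if m = i then v i + 0 else v m) = v := by
    funext m
    split_ifs with h
    · rw [h]; ring
    · rfl
  have hloc : IsLocalMin
      (fun t => pEnergy G C p B g (fun m => if m = i then v i + t else v m)) 0 := by
    apply Filter.Eventually.of_forall
    intro t
    have hmem : ∀ m ∈ B, (if m = i then v i + t else v m) = w m := by
      intro m hm
      have hne : m ≠ i := fun hmi => hi (hmi ▸ hm)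
      rw [if_neg hne]
      exact hvB m hm
    calc pEnergy G C p B g (fun m => if m = i then v i + 0 else v m)
        = pEnergy G C p B g v := by rw [h0]
      _ ≤ pEnergy G C p B g (fun m => if m = i then v i + t else v m) :=
          hvmin _ hmem
  have hd := energy_hasDerivAt G C hsymm hpos p hp B g v i hi
  have hz := hloc.hasDerivAt_eq_zero hd
  linarith
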